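/- The isoperimetric ratio gradient flow does not decrease the enclosed area: let x : ℝ × [0,T) → ℝ² be a smooth family of closed curves evolving by the isoperimetric ratio gradient flow ∂_t x = (k − L(t)/(2A(t)))·N. Then for all t ∈ [0,T), (d/dt) A(t) = −2π + L(t)²/(2A(t)) ≥ 0; in particular, t ↦ A(t) is nondecreasing on [0,T). -/

import Mathlib

open Real

open MeasureTheory intervalIntegral Set Filter Complex AddCircle
open scoped ENNReal Topology

local notation "conj'" => starRingEnd ℂ

lemma hurwitz_core {w h : ℝ → ℂ} {L : ℝ} (hL : 0 < L)
    (hw : ∀ v, HasDerivAt w (h v) v) (hh : Continuous h)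
    (hper : ∀ v, w (v + 1) = w v) (hnorm : ∀ v, ‖h v‖ = L) :
    (∫ v in (0:ℝ)..1, (conj' (w v) * h v)).im ≤ L ^ 2 / (2 * π) := by
  have hT : Fact (0 < (1:ℝ)) := ⟨one_pos⟩
  have hwc : Continuous w := by
    rw [continuous_iff_continuousAt]; exact fun v => (hw v).continuousAt
  have hwper : w 0 = w 1 := by simpa using (hper 0).symm
  have hhper : ∀ v, h (v + 1) = h v := by
    intro v
    have h2 : HasDerivAt (fun u => w (u + 1)) (h v) v := by
      have he : (fun u => w (u + 1)) = w := funext hper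
      rw [he]; exact hw v
    have hde : deriv w = h := funext fun u => (hw u).deriv
    have h1 : deriv (fun u => w (u + 1)) v = deriv w (v + 1) := deriv_comp_add_const w 1 v
    have he : (fun u => w (u + 1)) = w := funext hper
    rw [he, hde] at h1
    exact h1.symm
  set W : AddCircle 1 → ℂ := AddCircle.liftIco 1 0 w with hWdef
  set H : AddCircle 1 → ℂ := AddCircle.liftIco 1 0 h with hHdef
  have hWc : Continuous W := AddCircle.liftIco_zero_continuous hwper hwc.continuousOn
  have hHc : Continuous H :=
    AddCircle.liftIco_zero_continuous (by simpa using (hhper 0).symm) hh.continuousOn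
  set fW := ContinuousMap.toLp (E := ℂ) 2 haarAddCircle ℂ ⟨W, hWc⟩ with hfW
  set fH := ContinuousMap.toLp (E := ℂ) 2 haarAddCircle ℂ ⟨H, hHc⟩ with hfH
  set c : ℤ → ℂ := fun n => fourierCoeff W n with hc
  set d : ℤ → ℂ := fun n => fourierCoeff H n with hd
  have hcW : ∀ n, fourierCoeff fW n = c n := fun n => fourierCoeff_toLp ⟨W, hWc⟩ n
  have hdH : ∀ n, fourierCoeff fH n = d n := fun n => fourierCoeff_toLp ⟨H, hHc⟩ n
  have hcOn : ∀ n, c n = fourierCoeffOn (by norm_num : (0:ℝ) < 0 + 1) w n := fun n =>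
    fourierCoeff_liftIco_eq w n
  have hdOn : ∀ n, d n = fourierCoeffOn (by norm_num : (0:ℝ) < 0 + 1) h n := fun n =>
    fourierCoeff_liftIco_eq h n
  have hw10 : w (0 + 1) - w 0 = 0 := sub_eq_zero.2 (hper 0)
  -- d 0 = 0
  have hd0 : d 0 = 0 := by
    rw [hdOn, fourierCoeffOn_eq_integral]
    simp only [neg_zero, fourier_zero, one_smul, sub_zero, zero_add]
    rw [integral_eq_sub_of_hasDerivAt (fun v _ => hw v) (hh.intervalIntegrable 0 1)]
    simpa using hw10
  -- derivative relation
  have hrel : ∀ n : ℤ, n ≠ 0 → d n = (2 * π * Complex.I * n) * c n := by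
    intro n hn
    have hcoef := fourierCoeffOn_of_hasDerivAt (by norm_num : (0:ℝ) < 0 + 1) hn
      (fun v _ => hw v) (hh.intervalIntegrable 0 (0 + 1))
    rw [hw10, mul_zero, zero_sub] at hcoef
    rw [hcOn, hdOn, hcoef]
    have hne : (2 * (π:ℂ) * Complex.I * n) ≠ 0 := by
      simp [Real.pi_ne_zero, Complex.I_ne_zero, hn]
    field_simp
    try ring
    simp
  -- Parseval
  have hHnorm : ∀ q : AddCircle 1, ‖H q‖ = L := fun q => hnorm _
  have parseval : ∑' n : ℤ, ‖d n‖ ^ 2 = L ^ 2 := by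
    have h1 := tsum_sq_fourierCoeff fW
    have h2 := tsum_sq_fourierCoeff fH
    simp only [hdH] at h2
    rw [h2]
    have : ∀ᵐ q ∂(haarAddCircle (T := 1)), ‖fH q‖ ^ 2 = L ^ 2 := by
      filter_upwards [ContinuousMap.coeFn_toLp (p := 2) haarAddCircle (𝕜 := ℂ) ⟨H, hHc⟩] with q hq
      rw [hq]; simp [hHnorm q]
    rw [integral_congr_ae this]
    simp
  have hsumd : Summable (fun n : ℤ => ‖d n‖ ^ 2) := by
    have hm := lp.memℓp (fourierBasis.repr fH)
    rw [memℓp_gen_iff (by norm_num)] at hm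
    have : ∀ n : ℤ, ‖(fourierBasis.repr fH) n‖ ^ (2 : ℝ≥0∞).toReal = ‖d n‖ ^ 2 := by
      intro n
      rw [fourierBasis_repr, hdH]
      norm_num [Real.rpow_natCast]
    exact (summable_congr this).1 hm
  -- inner product expansion
  have hinner : HasSum (fun n : ℤ => conj' (c n) * d n) (inner ℂ fW fH) := by
    have hs := fourierBasis.hasSum_inner_mul_inner fW fH
    have : ∀ n : ℤ, (inner ℂ fW (fourierBasis n)) * (inner ℂ (fourierBasis n) fH)
        = conj' (c n) * d n := by
      intro n
      rw [← HilbertBasis.repr_apply_apply, ← inner_conj_symm, ← HilbertBasis.repr_apply_apply,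
        fourierBasis_repr, fourierBasis_repr, hcW, hdH]
    simpa only [this] using hs
  -- inner product as interval integral
  have hinner_eq : (inner ℂ fW fH) = ∫ v in (0:ℝ)..1, conj' (w v) * h v := by
    have hK : (fun q => conj' (W q) * H q) = AddCircle.liftIco 1 0 (fun v => conj' (w v) * h v) :=
      rfl
    have h1 : (inner ℂ fW fH) = ∫ q, conj' (W q) * H q ∂(haarAddCircle (T := 1)) := by
      rw [MeasureTheory.L2.inner_def]
      apply MeasureTheory.integral_congr_ae
      filter_upwards [ContinuousMap.coeFn_toLp (p := 2) haarAddCircle (𝕜 := ℂ) ⟨W, hWc⟩,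
        ContinuousMap.coeFn_toLp (p := 2) haarAddCircle (𝕜 := ℂ) ⟨H, hHc⟩] with q hq1 hq2
      rw [hq1, hq2]
      simp [RCLike.inner_apply, mul_comm]
    have h2 : (∫ q, conj' (W q) * H q ∂(haarAddCircle (T := 1)))
        = fourierCoeff (fun q => conj' (W q) * H q) 0 := by
      rw [fourierCoeff]
      simp
    rw [h1, h2, hK, fourierCoeff_liftIco_eq, fourierCoeffOn_eq_integral]
    simp
  -- imaginary parts
  have hIm : HasSum (fun n : ℤ => (conj' (c n) * d n).im)
      ((∫ v in (0:ℝ)..1, conj' (w v) * h v).im) := by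
    have := hinner.mapL Complex.imCLM
    rw [hinner_eq] at this
    simpa using this
  -- termwise bound
  have hterm : ∀ n : ℤ, (conj' (c n) * d n).im ≤ ‖d n‖ ^ 2 / (2 * π) := by
    intro n
    rcases eq_or_ne n 0 with rfl | hn
    · rw [hd0, mul_zero]
      simp only [Complex.zero_im, norm_zero]
      positivity
    · have hdn := hrel n hn
      have him : (conj' (c n) * d n).im = 2 * π * n * Complex.normSq (c n) := by
        have hcc : conj' (c n) * c n = (Complex.normSq (c n) : ℂ) :=
          Complex.normSq_eq_conj_mul_self.symm
        have heq : conj' (c n) * d n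
            = ((2 * π * (n:ℝ) * Complex.normSq (c n) : ℝ) : ℂ) * Complex.I := by
          rw [hdn]
          push_cast
          linear_combination (2 * (π:ℂ) * Complex.I * (n:ℂ)) * hcc
        rw [heq]
        simp
      have hnd : ‖d n‖ ^ 2 = (2 * π * n) ^ 2 * Complex.normSq (c n) := by
        rw [← Complex.normSq_eq_norm_sq, hdn, Complex.normSq_mul]
        have : Complex.normSq (2 * ↑π * Complex.I * ↑n) = (2 * π * n) ^ 2 := by
          simp [Complex.normSq_mul, Complex.normSq_I]
          ring
        rw [this]
      rw [him, hnd]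
      rw [le_div_iff₀ (by positivity : (0:ℝ) < 2 * π)]
      have hns : (n:ℝ) ≤ (n:ℝ) ^ 2 := by
        rcases le_or_gt 1 n with hn1 | hn1
        · nlinarith [show (1:ℝ) ≤ (n:ℝ) by exact_mod_cast hn1]
        · have : (n:ℝ) ≤ 0 := by
            have : n ≤ 0 := by omega
            exact_mod_cast this
          nlinarith
      have h1 : (n:ℝ) * Complex.normSq (c n) ≤ (n:ℝ) ^ 2 * Complex.normSq (c n) :=
        mul_le_mul_of_nonneg_right hns (Complex.normSq_nonneg _)
      calc 2 * π * (n:ℝ) * Complex.normSq (c n) * (2 * π)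
          = 4 * π ^ 2 * ((n:ℝ) * Complex.normSq (c n)) := by ring
        _ ≤ 4 * π ^ 2 * ((n:ℝ) ^ 2 * Complex.normSq (c n)) :=
            mul_le_mul_of_nonneg_left h1 (by positivity)
        _ = (2 * π * (n:ℝ)) ^ 2 * Complex.normSq (c n) := by ring
  calc (∫ v in (0:ℝ)..1, conj' (w v) * h v).im
      = ∑' n : ℤ, (conj' (c n) * d n).im := hIm.tsum_eq.symm
    _ ≤ ∑' n : ℤ, ‖d n‖ ^ 2 / (2 * π) :=
        Summable.tsum_le_tsum hterm hIm.summable (hsumd.div_const _)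
    _ = (∑' n : ℤ, ‖d n‖ ^ 2) / (2 * π) := by rw [tsum_div_const]
    _ = L ^ 2 / (2 * π) := by rw [parseval]

lemma area_le {γ : ℝ → ℂ} {g ν : ℝ → ℝ}
    (hgpos : ∀ u, 0 < g u) (hgc : Continuous g) (hνc : Continuous ν)
    (hd : ∀ u, HasDerivAt γ ((g u : ℂ) * Complex.exp ((ν u : ℂ) * Complex.I)) u)
    (hper : ∀ u, γ (u + 1) = γ u) :
    (∫ u in (0:ℝ)..1, conj' (γ u) * ((g u : ℂ) * Complex.exp ((ν u : ℂ) * Complex.I))).im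
      ≤ (∫ u in (0:ℝ)..1, g u) ^ 2 / (2 * π) := by
  set γ' : ℝ → ℂ := fun u => (g u : ℂ) * Complex.exp ((ν u : ℂ) * Complex.I) with hγ'def
  have hγ'c : Continuous γ' := by
    apply (Complex.continuous_ofReal.comp hgc).mul
    exact Complex.continuous_exp.comp ((Complex.continuous_ofReal.comp hνc).mul continuous_const)
  have hγc : Continuous γ := by
    rw [continuous_iff_continuousAt]; exact fun u => (hd u).continuousAt
  have hnormγ' : ∀ u, ‖γ' u‖ = g u := by
    intro u
    simp only [hγ'def, norm_mul, Complex.norm_real, Real.norm_eq_abs,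
      Complex.norm_exp_ofReal_mul_I, mul_one]
    exact abs_of_pos (hgpos u)
  have hγ'per : ∀ u, γ' (u + 1) = γ' u := by
    intro u
    have hde : deriv γ = γ' := funext fun v => (hd v).deriv
    have h1 : deriv (fun u => γ (u + 1)) u = deriv γ (u + 1) := deriv_comp_add_const γ 1 u
    have he : (fun u => γ (u + 1)) = γ := funext hper
    rw [he, hde] at h1
    exact h1.symm
  have hgper : ∀ u, g (u + 1) = g u := by
    intro u
    have := congrArg norm (hγ'per u)
    rwa [hnormγ', hnormγ'] at this
  set L := ∫ u in (0:ℝ)..1, g u with hLdef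
  have hL : 0 < L :=
    intervalIntegral.intervalIntegral_pos_of_pos_on (hgc.intervalIntegrable 0 1)
      (fun x _ => hgpos x) one_pos
  set σ : ℝ → ℝ := fun u => (∫ x in (0:ℝ)..u, g x) / L with hσdef
  have hσd : ∀ u, HasDerivAt σ (g u / L) u := by
    intro u
    exact (intervalIntegral.integral_hasDerivAt_right (hgc.intervalIntegrable 0 u)
      (hgc.stronglyMeasurableAtFilter _ _) hgc.continuousAt).div_const L
  have hσc : Continuous σ := by
    rw [continuous_iff_continuousAt]; exact fun u => (hσd u).continuousAt
  have hσmono : StrictMono σ := by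
    apply strictMono_of_deriv_pos
    intro u
    rw [(hσd u).deriv]
    have := hgpos u
    positivity
  have hσ0 : σ 0 = 0 := by simp [hσdef]
  have hσadd : ∀ u, σ (u + 1) = σ u + 1 := by
    intro u
    have h1 : ∫ x in (0:ℝ)..(u+1), g x
        = (∫ x in (0:ℝ)..u, g x) + ∫ x in u..(u+1), g x :=
      (intervalIntegral.integral_add_adjacent_intervals (hgc.intervalIntegrable 0 u)
        (hgc.intervalIntegrable u (u+1))).symm
    have h2 : ∫ x in u..(u+1), g x = ∫ x in (0:ℝ)..(0+1), g x :=
      Function.Periodic.intervalIntegral_add_eq hgper u 0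
    simp only [hσdef, h1, h2, zero_add]
    rw [← hLdef, add_div, div_self hL.ne']
  have hσnat : ∀ (u : ℝ) (n : ℕ), σ (u + n) = σ u + n := by
    intro u n
    induction n with
    | zero => simp
    | succ k ih =>
      push_cast
      rw [← add_assoc, hσadd, ih]
      ring
  have hσsurj : Function.Surjective σ := by
    intro y
    obtain ⟨n, hn⟩ := exists_nat_ge |y|
    have hlow : σ (-(n:ℝ)) = -(n:ℝ) := by
      have := hσnat (-(n:ℝ)) n
      simp at this
      linarith [hσ0, this]
    have hhigh : σ (n:ℝ) = (n:ℝ) := by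
      have := hσnat 0 n
      rw [hσ0] at this
      simpa using this
    have hy : y ∈ Icc (σ (-(n:ℝ))) (σ (n:ℝ)) := by
      rw [hlow, hhigh]
      constructor
      · linarith [neg_abs_le y]
      · linarith [le_abs_self y]
    obtain ⟨u, _, hu⟩ := intermediate_value_Icc (by linarith [abs_nonneg y] : -(n:ℝ) ≤ (n:ℝ))
      hσc.continuousOn hy
    exact ⟨u, hu⟩
  set e := StrictMono.orderIsoOfSurjective σ hσmono hσsurj with hedef
  have hecoe : ∀ u, e u = σ u := fun u => by
    rw [hedef, StrictMono.coe_orderIsoOfSurjective]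
  set ψ : ℝ → ℝ := fun v => e.symm v with hψdef
  have hσψ : ∀ v, σ (ψ v) = v := by
    intro v
    rw [← hecoe]
    exact e.apply_symm_apply v
  have hψc : Continuous ψ := (e.symm).continuous
  have hψd : ∀ v, HasDerivAt ψ ((g (ψ v) / L)⁻¹) v := by
    intro v
    refine HasDerivAt.of_local_left_inverse hψc.continuousAt (hσd (ψ v)) ?_
      (Eventually.of_forall hσψ)
    have h1 := hgpos (ψ v)
    positivity
  have hψadd : ∀ v, ψ (v + 1) = ψ v + 1 := by
    intro v
    apply hσmono.injective
    rw [hσψ, hσadd, hσψ]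
  set w : ℝ → ℂ := fun v => γ (ψ v) with hwdef
  set hfun : ℝ → ℂ := fun v => (L : ℂ) * Complex.exp ((ν (ψ v) : ℂ) * Complex.I) with hhdef
  have hgψ : ∀ v, g (ψ v) ≠ 0 := fun v => (hgpos (ψ v)).ne'
  have hsmul : ∀ v, ((g (ψ v) / L)⁻¹ : ℝ) • γ' (ψ v) = hfun v := by
    intro v
    rw [hγ'def, hhdef]
    simp only [real_smul]
    push_cast
    rw [← mul_assoc]
    congr 1
    field_simp
    exact (mul_div_cancel_left₀ _ (Complex.ofReal_ne_zero.2 (hgψ v)))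
  have hwd : ∀ v, HasDerivAt w (hfun v) v := by
    intro v
    have := (hd (ψ v)).scomp v (hψd v)
    rw [hsmul v] at this
    exact this
  have hwper : ∀ v, w (v + 1) = w v := by
    intro v
    rw [hwdef]
    simp only [hψadd, hper]
  have hnormh : ∀ v, ‖hfun v‖ = L := by
    intro v
    simp only [hhdef, norm_mul, Complex.norm_real, Real.norm_eq_abs,
      Complex.norm_exp_ofReal_mul_I, mul_one]
    exact abs_of_pos hL
  have hhc : Continuous hfun := by
    apply continuous_const.mul
    exact Complex.continuous_exp.comp
      ((Complex.continuous_ofReal.comp (hνc.comp hψc)).mul continuous_const)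
  have core := hurwitz_core hL hwd hhc hwper hnormh
  have hFc : Continuous (fun u => conj' (γ u) * γ' u) :=
    (Complex.continuous_conj.comp hγc).mul hγ'c
  have hψ'c : Continuous (fun v => ((g (ψ v) / L)⁻¹ : ℝ)) := by
    apply Continuous.inv₀ (((hgc.comp hψc)).div_const L)
    intro v
    have := hgpos (ψ v)
    positivity
  have hcv : (∫ v in (0:ℝ)..1, conj' (w v) * hfun v)
      = ∫ u in (ψ 0)..(ψ 1), conj' (γ u) * γ' u := by
    rw [← intervalIntegral.integral_comp_smul_deriv (fun v _ => hψd v)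
      hψ'c.continuousOn hFc]
    apply intervalIntegral.integral_congr
    intro v _
    show conj' (w v) * hfun v = _
    rw [← hsmul v, mul_smul_comm]
    rfl
  have hψ1 : ψ 1 = ψ 0 + 1 := by
    have := hψadd 0
    rwa [zero_add] at this
  have hperiodF : Function.Periodic (fun u => conj' (γ u) * γ' u) 1 := by
    intro u
    simp only [hper, hγ'per]
  have hshift : (∫ u in (ψ 0)..(ψ 0 + 1), conj' (γ u) * γ' u)
      = ∫ u in (0:ℝ)..(0+1), conj' (γ u) * γ' u :=
    hperiodF.intervalIntegral_add_eq (ψ 0) 0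
  rw [hcv, hψ1, hshift] at core
  simpa using core

-- component extraction for HasDerivAt into products
lemma hasDerivAt_fst {f : ℝ → ℝ × ℝ} {f' : ℝ × ℝ} {u : ℝ} (h : HasDerivAt f f' u) :
    HasDerivAt (fun v => (f v).1) f'.1 u := by
  have h2 := (ContinuousLinearMap.fst ℝ ℝ ℝ).hasFDerivAt.comp u h.hasFDerivAt
  have h3 := h2.hasDerivAt
  simp at h3
  exact h3

lemma hasDerivAt_snd {f : ℝ → ℝ × ℝ} {f' : ℝ × ℝ} {u : ℝ} (h : HasDerivAt f f' u) :
    HasDerivAt (fun v => (f v).2) f'.2 u := by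
  have h2 := (ContinuousLinearMap.snd ℝ ℝ ℝ).hasFDerivAt.comp u h.hasFDerivAt
  have h3 := h2.hasDerivAt
  simp at h3
  exact h3

lemma hasDerivWithinAt_fst {f : ℝ → ℝ × ℝ} {f' : ℝ × ℝ} {s : Set ℝ} {u : ℝ}
    (h : HasDerivWithinAt f f' s u) : HasDerivWithinAt (fun v => (f v).1) f'.1 s u := by
  have h2 := (ContinuousLinearMap.fst ℝ ℝ ℝ).hasFDerivAt.comp_hasFDerivWithinAt u
    h.hasFDerivWithinAt
  have h3 := h2.hasDerivWithinAt
  simp at h3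
  exact h3

lemma hasDerivWithinAt_snd {f : ℝ → ℝ × ℝ} {f' : ℝ × ℝ} {s : Set ℝ} {u : ℝ}
    (h : HasDerivWithinAt f f' s u) : HasDerivWithinAt (fun v => (f v).2) f'.2 s u := by
  have h2 := (ContinuousLinearMap.snd ℝ ℝ ℝ).hasFDerivAt.comp_hasFDerivWithinAt u
    h.hasFDerivWithinAt
  have h3 := h2.hasDerivWithinAt
  simp at h3
  exact h3

-- a determinant bound
lemma det2_bound (a b : ℝ × ℝ) : |a.1 * b.2 - a.2 * b.1| ≤ 2 * ‖a‖ * ‖b‖ := by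
  have h1 : |a.1| ≤ ‖a‖ := by simpa using norm_fst_le a
  have h2 : |a.2| ≤ ‖a‖ := by simpa using norm_snd_le a
  have h3 : |b.1| ≤ ‖b‖ := by simpa using norm_fst_le b
  have h4 : |b.2| ≤ ‖b‖ := by simpa using norm_snd_le b
  calc |a.1 * b.2 - a.2 * b.1| ≤ |a.1 * b.2| + |a.2 * b.1| := abs_sub _ _
    _ = |a.1| * |b.2| + |a.2| * |b.1| := by rw [abs_mul, abs_mul]
    _ ≤ ‖a‖ * ‖b‖ + ‖a‖ * ‖b‖ :=
        add_le_add (mul_le_mul h1 h4 (abs_nonneg _) (norm_nonneg _))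
          (mul_le_mul h2 h3 (abs_nonneg _) (norm_nonneg _))
    _ = 2 * ‖a‖ * ‖b‖ := by ring

-- continuity of a parametric interval integral
lemma contOn_param_integral {E : Type*} [NormedAddCommGroup E] [NormedSpace ℝ E]
    {q : ℝ → ℝ → E} {T : ℝ}
    (hq : ContinuousOn (fun p : ℝ × ℝ => q p.1 p.2) ((Set.univ : Set ℝ) ×ˢ Set.Ico 0 T)) :
    ContinuousOn (fun τ => ∫ u in (0:ℝ)..1, q u τ) (Set.Ico 0 T) := by
  intro τ₀ hτ₀
  set b := (τ₀ + T) / 2 with hbdef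
  have hτb : τ₀ < b := by simp only [hbdef]; linarith [hτ₀.2]
  have hbT : b < T := by simp only [hbdef]; linarith [hτ₀.2]
  have hb0 : (0:ℝ) ≤ b := le_of_lt (lt_of_le_of_lt hτ₀.1 hτb)
  set K := Icc (0:ℝ) b with hKdef
  have hKc : IsCompact (Icc (0:ℝ) 1 ×ˢ K) := isCompact_Icc.prod isCompact_Icc
  have hKsub : Icc (0:ℝ) 1 ×ˢ K ⊆ (Set.univ : Set ℝ) ×ˢ Set.Ico 0 T := by
    intro p hp
    exact ⟨trivial, hp.2.1, lt_of_le_of_lt hp.2.2 hbT⟩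
  obtain ⟨C, hC⟩ := hKc.exists_bound_of_continuousOn (hq.mono hKsub)
  have hev : ∀ᶠ τ in 𝓝[Set.Ico 0 T] τ₀, τ ∈ K := by
    filter_upwards [self_mem_nhdsWithin, mem_nhdsWithin_of_mem_nhds (Iio_mem_nhds hτb)]
      with τ h1 h2
    exact ⟨h1.1, le_of_lt h2⟩
  have hslice : ∀ τ ∈ Set.Ico (0:ℝ) T, ContinuousOn (fun u => q u τ) (Icc (0:ℝ) 1) := by
    intro τ hτ
    have : ContinuousOn ((fun p : ℝ × ℝ => q p.1 p.2) ∘ (fun u : ℝ => (u, τ))) (Icc 0 1) :=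
      hq.comp (Continuous.continuousOn (by fun_prop)) (fun u _ => ⟨trivial, hτ⟩)
    exact this
  apply intervalIntegral.tendsto_integral_filter_of_dominated_convergence (fun _ => C)
  · filter_upwards [self_mem_nhdsWithin] with τ hτ
    exact ((hslice τ hτ).mono (by rw [uIoc_of_le zero_le_one]; exact Ioc_subset_Icc_self)
      ).aestronglyMeasurable measurableSet_uIoc
  · filter_upwards [hev] with τ hτK
    refine .of_forall fun u hu => ?_
    refine hC (u, τ) ⟨?_, hτK⟩
    rw [uIoc_of_le zero_le_one] at hu
    exact Ioc_subset_Icc_self hu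
  · exact intervalIntegrable_const
  · refine .of_forall fun u hu => ?_
    have h1 : ContinuousWithinAt (fun p : ℝ × ℝ => q p.1 p.2)
        ((Set.univ : Set ℝ) ×ˢ Set.Ico 0 T) (u, τ₀) := hq (u, τ₀) ⟨trivial, hτ₀⟩
    have h2 : ContinuousWithinAt (fun τ : ℝ => ((u, τ) : ℝ × ℝ)) (Set.Ico 0 T) τ₀ :=
      Continuous.continuousWithinAt (by fun_prop)
    have h3 := h1.comp h2 (fun τ hτ => ⟨trivial, hτ⟩)
    exact h3

lemma g_exp (gg nn : ℝ) : ((gg:ℂ)) * Complex.exp ((nn:ℂ) * Complex.I)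
    = ((gg * Real.cos nn : ℝ) : ℂ) + ((gg * Real.sin nn : ℝ) : ℂ) * Complex.I := by
  rw [Complex.exp_mul_I]
  push_cast
  ring

lemma abs_g_exp (gg nn : ℝ) (h : 0 ≤ gg) :
    ‖(((gg * Real.cos nn : ℝ) : ℂ) + ((gg * Real.sin nn : ℝ) : ℂ) * Complex.I)‖
      = gg := by
  rw [Complex.norm_add_mul_I]
  have h1 : (gg * Real.cos nn) ^ 2 + (gg * Real.sin nn) ^ 2 = gg ^ 2 := by
    have := Real.sin_sq_add_cos_sq nn
    nlinarith [this]
  rw [h1, Real.sqrt_sq h]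

lemma im_conj_mul (a b gg nn : ℝ) :
    (conj' ((a:ℂ) + (b:ℂ) * Complex.I) * ((gg:ℂ) * Complex.exp ((nn:ℂ) * Complex.I))).im
      = a * (gg * Real.sin nn) - b * (gg * Real.cos nn) := by
  rw [g_exp, map_add, map_mul, Complex.conj_ofReal, Complex.conj_ofReal, Complex.conj_I]
  simp only [Complex.add_im, Complex.add_re, Complex.mul_im, Complex.mul_re,
    Complex.ofReal_re, Complex.ofReal_im, Complex.I_re, Complex.I_im, Complex.neg_im,
    Complex.neg_re]
  ring


/-- Enclosed area `A(t) = (1/2)∫₀¹ det(x(u,t), ∂_u x(u,t)) du`, with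
`∂_u x = g·(cos νf, sin νf)`. -/
noncomputable def areaF (x : ℝ → ℝ → ℝ × ℝ) (g νf : ℝ → ℝ → ℝ) (t : ℝ) : ℝ :=
  (1 / 2) * ∫ u in (0:ℝ)..1,
    ((x u t).1 * (g u t * Real.sin (νf u t)) - (x u t).2 * (g u t * Real.cos (νf u t)))

/-- Total length `L(t) = ∫₀¹ |∂_u x(u,t)| du`. -/
noncomputable def lenF (g : ℝ → ℝ → ℝ) (t : ℝ) : ℝ :=
  ∫ u in (0:ℝ)..1, g u t

/-- The isoperimetric ratio gradient flow `∂_t x = (k − L/(2A))·N` does not decrease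
the enclosed area: `(d/dt) A(t) = −2π + L(t)²/(2A(t)) ≥ 0`, so `A` is nondecreasing. -/
theorem isoperimetric_flow_area_nondecreasing
    (T : ℝ) (x : ℝ → ℝ → ℝ × ℝ) (g νf νu : ℝ → ℝ → ℝ)
    (hxs : ContDiffOn ℝ (⊤ : ℕ∞) (fun p : ℝ × ℝ => x p.1 p.2)
      ((Set.univ : Set ℝ) ×ˢ Set.Ico (0:ℝ) T))
    (hνs : ContDiffOn ℝ (⊤ : ℕ∞) (fun p : ℝ × ℝ => νf p.1 p.2)
      ((Set.univ : Set ℝ) ×ˢ Set.Ico (0:ℝ) T))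
    (hper : ∀ u, ∀ t ∈ Set.Ico (0:ℝ) T, x (u + 1) t = x u t)
    (hνper : ∀ u, ∀ t ∈ Set.Ico (0:ℝ) T, νf (u + 1) t = νf u t + 2 * π)
    (hg : ∀ u, ∀ t ∈ Set.Ico (0:ℝ) T, 0 < g u t)
    (htang : ∀ u, ∀ t ∈ Set.Ico (0:ℝ) T,
      HasDerivAt (fun u' => x u' t)
        (g u t • ((Real.cos (νf u t), Real.sin (νf u t)) : ℝ × ℝ)) u)
    (hνu : ∀ u, ∀ t ∈ Set.Ico (0:ℝ) T, HasDerivAt (fun u' => νf u' t) (νu u t) u)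
    (hinj : ∀ t ∈ Set.Ico (0:ℝ) T, Set.InjOn (fun u => x u t) (Set.Ico 0 1))
    (hA : ∀ t ∈ Set.Ico (0:ℝ) T, 0 < areaF x g νf t)
    -- the isoperimetric ratio gradient flow equation `∂_t x = (k − L/(2A))·N`
    (hflow : ∀ u, ∀ t ∈ Set.Ico (0:ℝ) T,
      HasDerivWithinAt (fun t' => x u t')
        (((νu u t / g u t - lenF g t / (2 * areaF x g νf t)) •
          ((-Real.sin (νf u t), Real.cos (νf u t)) : ℝ × ℝ)))
        (Set.Ico 0 T) t) :
    (∀ t ∈ Set.Ico (0:ℝ) T,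
      HasDerivWithinAt (areaF x g νf)
        (-(2 * π) + lenF g t ^ 2 / (2 * areaF x g νf t)) (Set.Ico 0 T) t ∧
      0 ≤ -(2 * π) + lenF g t ^ 2 / (2 * areaF x g νf t)) ∧
    MonotoneOn (areaF x g νf) (Set.Ico 0 T) := by
  set S : Set (ℝ × ℝ) := (Set.univ : Set ℝ) ×ˢ Set.Ico (0:ℝ) T with hSdef
  set X : ℝ → ℝ → ℝ × ℝ :=
    fun u τ => g u τ • ((Real.cos (νf u τ), Real.sin (νf u τ)) : ℝ × ℝ) with hXdef
  have hX1 : ∀ u τ, (X u τ).1 = g u τ * Real.cos (νf u τ) := fun u τ => rfl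
  have hX2 : ∀ u τ, (X u τ).2 = g u τ * Real.sin (νf u τ) := fun u τ => rfl
  -- slice regularity
  have hxsl : ∀ t ∈ Set.Ico (0:ℝ) T, ContDiff ℝ (⊤ : ℕ∞) (fun u => x u t) := by
    intro t ht
    have h := hxs.comp ((contDiff_id.prodMk contDiff_const).contDiffOn
      (s := (Set.univ : Set ℝ))) (fun u _ => ⟨trivial, ht⟩)
    exact contDiffOn_univ.1 h
  have hνsl : ∀ t ∈ Set.Ico (0:ℝ) T, ContDiff ℝ (⊤ : ℕ∞) (fun u => νf u t) := by
    intro t ht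
    have h := hνs.comp ((contDiff_id.prodMk contDiff_const).contDiffOn
      (s := (Set.univ : Set ℝ))) (fun u _ => ⟨trivial, ht⟩)
    exact contDiffOn_univ.1 h
  have hXsl : ∀ t ∈ Set.Ico (0:ℝ) T, Continuous (fun u => X u t) := by
    intro t ht
    have hd : deriv (fun u => x u t) = fun u => X u t := funext fun u => (htang u t ht).deriv
    rw [← hd]
    exact (hxsl t ht).continuous_deriv (by simp)
  have hgsl : ∀ t ∈ Set.Ico (0:ℝ) T, Continuous (fun u => g u t) := by
    intro t ht
    have h1 : Continuous (fun u =>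
        ‖(((X u t).1 : ℂ) + ((X u t).2 : ℂ) * Complex.I)‖) := by
      apply continuous_norm.comp
      apply Continuous.add
      · exact Complex.continuous_ofReal.comp (continuous_fst.comp (hXsl t ht))
      · exact (Complex.continuous_ofReal.comp (continuous_snd.comp (hXsl t ht))).mul
          continuous_const
    have h2 : (fun u => g u t) = fun u =>
        ‖(((X u t).1 : ℂ) + ((X u t).2 : ℂ) * Complex.I)‖ := by
      funext u
      rw [hX1, hX2, abs_g_exp _ _ (hg u t ht).le]
    rw [h2]
    exact h1
  have hνusl : ∀ t ∈ Set.Ico (0:ℝ) T, Continuous (fun u => νu u t) := by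
    intro t ht
    have hd : deriv (fun u => νf u t) = fun u => νu u t := funext fun u => (hνu u t ht).deriv
    rw [← hd]
    exact (hνsl t ht).continuous_deriv (by simp)
  -- the isoperimetric inequality at each time
  have hineq : ∀ t ∈ Set.Ico (0:ℝ) T,
      0 ≤ -(2 * π) + lenF g t ^ 2 / (2 * areaF x g νf t) := by
    intro t ht
    set γ : ℝ → ℂ := fun u => ((x u t).1 : ℂ) + ((x u t).2 : ℂ) * Complex.I with hγdef
    have hγd : ∀ u, HasDerivAt γ
        (((g u t : ℝ) : ℂ) * Complex.exp (((νf u t : ℝ) : ℂ) * Complex.I)) u := by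
      intro u
      have h1 := (hasDerivAt_fst (htang u t ht)).ofReal_comp
      have h2 := ((hasDerivAt_snd (htang u t ht)).ofReal_comp).mul_const Complex.I
      have h3 := h1.add h2
      rw [g_exp]
      rw [hX1, hX2] at h3
      exact h3
    have hγper : ∀ u, γ (u + 1) = γ u := by
      intro u
      simp only [hγdef, hper u t ht]
    have harea := area_le (fun u => hg u t ht) (hgsl t ht) (hνsl t ht).continuous hγd hγper
    have hcontF : Continuous (fun u => conj' (γ u) *
        (((g u t : ℝ) : ℂ) * Complex.exp (((νf u t : ℝ) : ℂ) * Complex.I))) := by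
      have hγc : Continuous γ := by
        rw [continuous_iff_continuousAt]
        exact fun u => (hγd u).continuousAt
      exact (Complex.continuous_conj.comp hγc).mul
        ((Complex.continuous_ofReal.comp (hgsl t ht)).mul
          (Complex.continuous_exp.comp
            ((Complex.continuous_ofReal.comp (hνsl t ht).continuous).mul continuous_const)))
    have hAeq : areaF x g νf t = (1 / 2) * (∫ u in (0:ℝ)..1, conj' (γ u) *
        (((g u t : ℝ) : ℂ) * Complex.exp (((νf u t : ℝ) : ℂ) * Complex.I))).im := by
      rw [areaF]
      congr 1
      have h0 := Complex.imCLM.intervalIntegral_comp_comm (μ := volume) (a := (0:ℝ)) (b := 1)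
        (hcontF.intervalIntegrable 0 1)
      simp only [Complex.imCLM_apply] at h0
      rw [← h0]
      apply intervalIntegral.integral_congr
      intro u _
      exact (im_conj_mul _ _ _ _).symm
    have hAle : areaF x g νf t ≤ lenF g t ^ 2 / (4 * π) := by
      rw [hAeq, lenF]
      have hπ : 0 < π := Real.pi_pos
      calc (1 / 2) * (∫ u in (0:ℝ)..1, conj' (γ u) *
          (((g u t : ℝ) : ℂ) * Complex.exp (((νf u t : ℝ) : ℂ) * Complex.I))).im
          ≤ (1 / 2) * ((∫ u in (0:ℝ)..1, g u t) ^ 2 / (2 * π)) := by linarith [harea]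
        _ = (∫ u in (0:ℝ)..1, g u t) ^ 2 / (4 * π) := by ring
    have hApos := hA t ht
    have h2A : (0:ℝ) < 2 * areaF x g νf t := by linarith
    have hπ : 0 < π := Real.pi_pos
    have h5 : 2 * π ≤ lenF g t ^ 2 / (2 * areaF x g νf t) := by
      rw [le_div_iff₀ h2A]
      have h6 := (le_div_iff₀ (by positivity : (0:ℝ) < 4 * π)).1 hAle
      linarith
    linarith
  -- main derivative claim
  have key : ∀ t₀ ∈ Set.Ico (0:ℝ) T,
      HasDerivWithinAt (areaF x g νf)
        (-(2 * π) + lenF g t₀ ^ 2 / (2 * areaF x g νf t₀)) (Set.Ico 0 T) t₀ := by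
    intro t₀ ht₀
    have hT0 : 0 < T := lt_of_le_of_lt ht₀.1 ht₀.2
    -- unique differentiability
    have hSconv : Convex ℝ S := convex_univ.prod (convex_Ico 0 T)
    have hSint : interior S = (Set.univ : Set ℝ) ×ˢ Ioo 0 T := by
      rw [hSdef, interior_prod_eq, interior_univ, interior_Ico]
    have hSuniq : UniqueDiffOn ℝ S := by
      apply uniqueDiffOn_convex hSconv
      rw [hSint]
      exact univ_nonempty.prod ⟨T / 2, by constructor <;> linarith⟩
    -- identification of fderivWithin with X and νu, and joint continuity
    have hXeqS : ∀ p ∈ S,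
        fderivWithin ℝ (fun p : ℝ × ℝ => x p.1 p.2) S p (1, 0) = X p.1 p.2 := by
      rintro ⟨u, τ⟩ hp
      have hdiff := (hxs.differentiableOn (by simp)) _ hp
      have hline : HasFDerivAt (fun u' : ℝ => ((u', τ) : ℝ × ℝ))
          ((ContinuousLinearMap.id ℝ ℝ).prod 0) u :=
        HasFDerivAt.prodMk (hasFDerivAt_id u) (hasFDerivAt_const τ u)
      have hcomp := hdiff.hasFDerivWithinAt.comp u (hline.hasFDerivWithinAt (s := (Set.univ : Set ℝ)))
        (fun u' _ => show ((u', τ) : ℝ × ℝ) ∈ S from ⟨trivial, hp.2⟩)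
      rw [hasFDerivWithinAt_univ] at hcomp
      have hder := hcomp.hasDerivAt
      have huniq := (htang u τ hp.2).unique hder
      simpa [hXdef] using huniq.symm
    have hνueqS : ∀ p ∈ S,
        fderivWithin ℝ (fun p : ℝ × ℝ => νf p.1 p.2) S p (1, 0) = νu p.1 p.2 := by
      rintro ⟨u, τ⟩ hp
      have hdiff := (hνs.differentiableOn (by simp)) _ hp
      have hline : HasFDerivAt (fun u' : ℝ => ((u', τ) : ℝ × ℝ))
          ((ContinuousLinearMap.id ℝ ℝ).prod 0) u :=
        HasFDerivAt.prodMk (hasFDerivAt_id u) (hasFDerivAt_const τ u)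
      have hcomp := hdiff.hasFDerivWithinAt.comp u (hline.hasFDerivWithinAt (s := (Set.univ : Set ℝ)))
        (fun u' _ => show ((u', τ) : ℝ × ℝ) ∈ S from ⟨trivial, hp.2⟩)
      rw [hasFDerivWithinAt_univ] at hcomp
      have hder := hcomp.hasDerivAt
      have huniq := (hνu u τ hp.2).unique hder
      simpa using huniq.symm
    have hXcontS : ContinuousOn (fun p : ℝ × ℝ => X p.1 p.2) S := by
      have h1 := hxs.continuousOn_fderivWithin hSuniq (by simp)
      have h2 : ContinuousOn
          (fun p => fderivWithin ℝ (fun p : ℝ × ℝ => x p.1 p.2) S p (1, 0)) S :=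
        h1.clm_apply continuousOn_const
      exact h2.congr (fun p hp => (hXeqS p hp).symm)
    have hνucontS : ContinuousOn (fun p : ℝ × ℝ => νu p.1 p.2) S := by
      have h1 := hνs.continuousOn_fderivWithin hSuniq (by simp)
      have h2 : ContinuousOn
          (fun p => fderivWithin ℝ (fun p : ℝ × ℝ => νf p.1 p.2) S p (1, 0)) S :=
        h1.clm_apply continuousOn_const
      exact h2.congr (fun p hp => (hνueqS p hp).symm)
    have hgcontS : ContinuousOn (fun p : ℝ × ℝ => g p.1 p.2) S := by
      have h1 : ContinuousOn (fun p : ℝ × ℝ =>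
          ‖(((X p.1 p.2).1 : ℂ) + ((X p.1 p.2).2 : ℂ) * Complex.I)‖) S := by
        apply continuous_norm.comp_continuousOn
        apply ContinuousOn.add
        · exact Complex.continuous_ofReal.comp_continuousOn
            (continuous_fst.comp_continuousOn hXcontS)
        · exact (Complex.continuous_ofReal.comp_continuousOn
            (continuous_snd.comp_continuousOn hXcontS)).mul continuousOn_const
      apply h1.congr
      intro p hp
      show g p.1 p.2 = ‖(((X p.1 p.2).1 : ℂ) + ((X p.1 p.2).2 : ℂ) * Complex.I)‖
      rw [hX1, hX2, abs_g_exp _ _ (hg p.1 p.2 hp.2).le]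
    have hνfcontS : ContinuousOn (fun p : ℝ × ℝ => νf p.1 p.2) S := hνs.continuousOn
    have hxcontS : ContinuousOn (fun p : ℝ × ℝ => x p.1 p.2) S := hxs.continuousOn
    have hLcont : ContinuousOn (lenF g) (Set.Ico 0 T) :=
      contOn_param_integral (q := fun u τ => g u τ) hgcontS
    have hAcont : ContinuousOn (areaF x g νf) (Set.Ico 0 T) := by
      have hqc : ContinuousOn (fun p : ℝ × ℝ =>
          ((x p.1 p.2).1 * (g p.1 p.2 * Real.sin (νf p.1 p.2))
            - (x p.1 p.2).2 * (g p.1 p.2 * Real.cos (νf p.1 p.2)))) S := by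
        apply ContinuousOn.sub
        · exact (continuous_fst.comp_continuousOn hxcontS).mul
            (hgcontS.mul (Real.continuous_sin.comp_continuousOn hνfcontS))
        · exact (continuous_snd.comp_continuousOn hxcontS).mul
            (hgcontS.mul (Real.continuous_cos.comp_continuousOn hνfcontS))
      have h1 := contOn_param_integral (q := fun u τ =>
        ((x u τ).1 * (g u τ * Real.sin (νf u τ)) - (x u τ).2 * (g u τ * Real.cos (νf u τ)))) hqc
      exact continuousOn_const.mul h1
    -- velocity field
    set Fv : ℝ → ℝ → ℝ × ℝ := fun u τ =>
      (νu u τ / g u τ - lenF g τ / (2 * areaF x g νf τ)) •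
        ((-Real.sin (νf u τ), Real.cos (νf u τ)) : ℝ × ℝ) with hFdef
    have hFcontS : ContinuousOn (fun p : ℝ × ℝ => Fv p.1 p.2) S := by
      apply ContinuousOn.fun_smul
      · apply ContinuousOn.sub
        · exact hνucontS.div hgcontS (fun p hp => (hg p.1 p.2 hp.2).ne')
        · apply ContinuousOn.div
          · exact hLcont.comp continuous_snd.continuousOn (fun p (hp : p ∈ S) => hp.2)
          · exact continuousOn_const.mul
              (hAcont.comp continuous_snd.continuousOn (fun p (hp : p ∈ S) => hp.2))
          · intro p hp
            have := hA p.2 hp.2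
            positivity
      · exact ((Real.continuous_sin.comp_continuousOn hνfcontS).neg).prodMk
          (Real.continuous_cos.comp_continuousOn hνfcontS)
    -- compact time window
    set b : ℝ := (t₀ + T) / 2 with hbdef
    have hτb : t₀ < b := by simp only [hbdef]; linarith [ht₀.2]
    have hbT : b < T := by simp only [hbdef]; linarith [ht₀.2]
    have hb0 : (0:ℝ) ≤ b := le_of_lt (lt_of_le_of_lt ht₀.1 hτb)
    set J : Set ℝ := Icc (0:ℝ) b with hJdef
    have hJsub : J ⊆ Set.Ico 0 T := fun τ hτ => ⟨hτ.1, lt_of_le_of_lt hτ.2 hbT⟩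
    have ht₀J : t₀ ∈ J := ⟨ht₀.1, le_of_lt hτb⟩
    have hprodsub : Icc (0:ℝ) 1 ×ˢ J ⊆ S := by
      intro p hp
      exact ⟨trivial, hJsub hp.2⟩
    have hcompact : IsCompact (Icc (0:ℝ) 1 ×ˢ J) := isCompact_Icc.prod isCompact_Icc
    obtain ⟨M, hM⟩ := hcompact.exists_bound_of_continuousOn (hFcontS.mono hprodsub)
    obtain ⟨Kb, hKb⟩ := hcompact.exists_bound_of_continuousOn (hXcontS.mono hprodsub)
    have hKb0 : 0 ≤ Kb := le_trans (norm_nonneg _) (hKb (0, t₀) ⟨⟨le_refl 0, zero_le_one⟩, ht₀J⟩)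
    have hM0 : 0 ≤ M := le_trans (norm_nonneg _) (hM (0, t₀) ⟨⟨le_refl 0, zero_le_one⟩, ht₀J⟩)
    -- mean value bound
    have hslopeB : ∀ u ∈ Icc (0:ℝ) 1, ∀ t ∈ J, ‖x u t - x u t₀‖ ≤ M * ‖t - t₀‖ := by
      intro u hu t ht
      exact (convex_Icc (0:ℝ) b).norm_image_sub_le_of_norm_hasDerivWithin_le
        (f := fun τ => x u τ) (f' := fun τ => Fv u τ)
        (fun τ hτ => (hflow u τ (hJsub hτ)).mono hJsub)
        (fun τ hτ => hM (u, τ) ⟨hu, hτ⟩) ht₀J ht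
    -- B and its difference identity
    set B : ℝ → ℝ := fun τ => ∫ u in (0:ℝ)..1,
      ((x u τ).1 * (X u τ).2 - (x u τ).2 * (X u τ).1) with hBdef
    have hBA : ∀ τ, areaF x g νf τ = (1 / 2) * B τ := fun τ => rfl
    have hintcont : ∀ t ∈ Set.Ico (0:ℝ) T, Continuous (fun u =>
        ((x u t).1 * (X u t).2 - (x u t).2 * (X u t).1)) := by
      intro t ht
      exact ((continuous_fst.comp (hxsl t ht).continuous).mul
        (continuous_snd.comp (hXsl t ht))).sub
        ((continuous_snd.comp (hxsl t ht).continuous).mul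
        (continuous_fst.comp (hXsl t ht)))
    have hBdiffeq : ∀ t ∈ Set.Ico (0:ℝ) T, B t - B t₀
        = ∫ u in (0:ℝ)..1,
            (((x u t).1 - (x u t₀).1) * ((X u t).2 + (X u t₀).2)
              - ((x u t).2 - (x u t₀).2) * ((X u t).1 + (X u t₀).1)) := by
      intro t ht
      have hq : ∀ u, HasDerivAt (fun v => (x v t₀).1 * ((x v t).2 - (x v t₀).2)
          - (x v t₀).2 * ((x v t).1 - (x v t₀).1))
          ((X u t₀).1 * ((x u t).2 - (x u t₀).2)
            + (x u t₀).1 * ((X u t).2 - (X u t₀).2)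
            - ((X u t₀).2 * ((x u t).1 - (x u t₀).1)
            + (x u t₀).2 * ((X u t).1 - (X u t₀).1))) u := by
        intro u
        exact ((hasDerivAt_fst (htang u t₀ ht₀)).mul
          ((hasDerivAt_snd (htang u t ht)).sub (hasDerivAt_snd (htang u t₀ ht₀)))).sub
          ((hasDerivAt_snd (htang u t₀ ht₀)).mul
          ((hasDerivAt_fst (htang u t ht)).sub (hasDerivAt_fst (htang u t₀ ht₀))))
      have hq'cont : Continuous (fun u =>
          ((X u t₀).1 * ((x u t).2 - (x u t₀).2)
            + (x u t₀).1 * ((X u t).2 - (X u t₀).2)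
            - ((X u t₀).2 * ((x u t).1 - (x u t₀).1)
            + (x u t₀).2 * ((X u t).1 - (X u t₀).1)))) := by
        have c1 := (hxsl t ht).continuous
        have c2 := (hxsl t₀ ht₀).continuous
        have c3 := hXsl t ht
        have c4 := hXsl t₀ ht₀
        exact (((continuous_fst.comp c4).mul
          ((continuous_snd.comp c1).sub (continuous_snd.comp c2))).add
          ((continuous_fst.comp c2).mul
          ((continuous_snd.comp c3).sub (continuous_snd.comp c4)))).sub
          (((continuous_snd.comp c4).mul
          ((continuous_fst.comp c1).sub (continuous_fst.comp c2))).add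
          ((continuous_snd.comp c2).mul
          ((continuous_fst.comp c3).sub (continuous_fst.comp c4))))
      have hper_t : x 1 t = x 0 t := by simpa using hper 0 t ht
      have hper_t₀ : x 1 t₀ = x 0 t₀ := by simpa using hper 0 t₀ ht₀
      have hftc : (∫ u in (0:ℝ)..1,
          ((X u t₀).1 * ((x u t).2 - (x u t₀).2)
            + (x u t₀).1 * ((X u t).2 - (X u t₀).2)
            - ((X u t₀).2 * ((x u t).1 - (x u t₀).1)
            + (x u t₀).2 * ((X u t).1 - (X u t₀).1)))) = 0 := by
        rw [integral_eq_sub_of_hasDerivAt (fun u _ => hq u) (hq'cont.intervalIntegrable 0 1)]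
        rw [hper_t, hper_t₀]
        ring
      have hsplit : ∀ u : ℝ,
          (((x u t).1 - (x u t₀).1) * ((X u t).2 + (X u t₀).2)
            - ((x u t).2 - (x u t₀).2) * ((X u t).1 + (X u t₀).1))
          = (((x u t).1 * (X u t).2 - (x u t).2 * (X u t).1)
            - ((x u t₀).1 * (X u t₀).2 - (x u t₀).2 * (X u t₀).1))
            - ((X u t₀).1 * ((x u t).2 - (x u t₀).2)
            + (x u t₀).1 * ((X u t).2 - (X u t₀).2)
            - ((X u t₀).2 * ((x u t).1 - (x u t₀).1)
            + (x u t₀).2 * ((X u t).1 - (X u t₀).1))) := by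
        intro u
        ring
      rw [intervalIntegral.integral_congr (fun u _ => hsplit u)]
      rw [intervalIntegral.integral_sub
        (((hintcont t ht).fun_sub (hintcont t₀ ht₀)).intervalIntegrable 0 1)
        (hq'cont.intervalIntegrable 0 1),
        intervalIntegral.integral_sub ((hintcont t ht).intervalIntegrable 0 1)
        ((hintcont t₀ ht₀).intervalIntegrable 0 1), hftc, hBdef]
      ring
    -- the limit integral
    set D : ℝ := ∫ u in (0:ℝ)..1,
      ((Fv u t₀).1 * ((X u t₀).2 + (X u t₀).2) - (Fv u t₀).2 * ((X u t₀).1 + (X u t₀).1))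
      with hDdef
    have hBderiv : HasDerivWithinAt B D (Set.Ico 0 T) t₀ := by
      rw [hasDerivWithinAt_iff_tendsto_slope]
      have hevJ : ∀ᶠ t in 𝓝[Set.Ico 0 T \ {t₀}] t₀, t ∈ J := by
        filter_upwards [self_mem_nhdsWithin,
          mem_nhdsWithin_of_mem_nhds (Iio_mem_nhds hτb)] with τ h1 h2
        exact ⟨h1.1.1, le_of_lt h2⟩
      have hmain : Tendsto (fun t => ∫ u in (0:ℝ)..1,
          (((t - t₀)⁻¹ * ((x u t).1 - (x u t₀).1)) * ((X u t).2 + (X u t₀).2)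
            - ((t - t₀)⁻¹ * ((x u t).2 - (x u t₀).2)) * ((X u t).1 + (X u t₀).1)))
          (𝓝[Set.Ico 0 T \ {t₀}] t₀) (𝓝 D) := by
        apply intervalIntegral.tendsto_integral_filter_of_dominated_convergence
          (fun _ => 2 * M * (Kb + Kb))
        · filter_upwards [self_mem_nhdsWithin] with t ht
          have ht' : t ∈ Set.Ico (0:ℝ) T := ht.1
          apply Continuous.aestronglyMeasurable
          exact ((continuous_const.mul ((continuous_fst.comp (hxsl t ht').continuous).sub
              (continuous_fst.comp (hxsl t₀ ht₀).continuous))).mul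
              ((continuous_snd.comp (hXsl t ht')).add (continuous_snd.comp (hXsl t₀ ht₀)))).sub
            ((continuous_const.mul ((continuous_snd.comp (hxsl t ht').continuous).sub
              (continuous_snd.comp (hxsl t₀ ht₀).continuous))).mul
              ((continuous_fst.comp (hXsl t ht')).add (continuous_fst.comp (hXsl t₀ ht₀))))
        · filter_upwards [hevJ, self_mem_nhdsWithin] with t htJ htm
          refine .of_forall fun u hu => ?_
          have hu' : u ∈ Icc (0:ℝ) 1 := by
            rw [uIoc_of_le zero_le_one] at hu
            exact Ioc_subset_Icc_self hu
          have hslope : ‖(t - t₀)⁻¹ • (x u t - x u t₀)‖ ≤ M := by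
            rcases eq_or_ne t t₀ with rfl | hne
            · exact absurd rfl htm.2
            have htt : ‖t - t₀‖ ≠ 0 := by
              simp only [ne_eq, norm_eq_zero, sub_eq_zero]
              exact hne
            rw [norm_smul, norm_inv]
            rw [inv_mul_le_iff₀ (lt_of_le_of_ne (norm_nonneg _) (Ne.symm htt))]
            calc ‖x u t - x u t₀‖ ≤ M * ‖t - t₀‖ := hslopeB u hu' t htJ
              _ = ‖t - t₀‖ * M := mul_comm _ _
          have hXb1 : ‖X u t + X u t₀‖ ≤ Kb + Kb := by
            calc ‖X u t + X u t₀‖ ≤ ‖X u t‖ + ‖X u t₀‖ := norm_add_le _ _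
              _ ≤ Kb + Kb := add_le_add (hKb (u, t) ⟨hu', htJ⟩) (hKb (u, t₀) ⟨hu', ht₀J⟩)
          have hdet := det2_bound ((t - t₀)⁻¹ • (x u t - x u t₀)) (X u t + X u t₀)
          have h1 : (((t - t₀)⁻¹ • (x u t - x u t₀)).1) = (t - t₀)⁻¹ * ((x u t).1 - (x u t₀).1) :=
            rfl
          have h2 : (((t - t₀)⁻¹ • (x u t - x u t₀)).2) = (t - t₀)⁻¹ * ((x u t).2 - (x u t₀).2) :=
            rfl
          have h3 : ((X u t + X u t₀).1) = (X u t).1 + (X u t₀).1 := rfl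
          have h4 : ((X u t + X u t₀).2) = (X u t).2 + (X u t₀).2 := rfl
          rw [h1, h2, h3, h4] at hdet
          rw [Real.norm_eq_abs]
          calc |((t - t₀)⁻¹ * ((x u t).1 - (x u t₀).1)) * ((X u t).2 + (X u t₀).2)
              - ((t - t₀)⁻¹ * ((x u t).2 - (x u t₀).2)) * ((X u t).1 + (X u t₀).1)|
              ≤ 2 * ‖(t - t₀)⁻¹ • (x u t - x u t₀)‖ * ‖X u t + X u t₀‖ := hdet
            _ ≤ 2 * M * (Kb + Kb) := by
                apply mul_le_mul _ hXb1 (norm_nonneg _) (by positivity)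
                linarith [hslope]
        · exact intervalIntegrable_const
        · refine .of_forall fun u hu => ?_
          have hXt : Tendsto (fun t => X u t) (𝓝[Set.Ico 0 T \ {t₀}] t₀) (𝓝 (X u t₀)) := by
            have h1 : ContinuousWithinAt (fun p : ℝ × ℝ => X p.1 p.2) S (u, t₀) :=
              hXcontS (u, t₀) ⟨trivial, ht₀⟩
            have h2 : ContinuousWithinAt (fun τ : ℝ => ((u, τ) : ℝ × ℝ))
                (Set.Ico 0 T) t₀ := Continuous.continuousWithinAt (by fun_prop)
            have h3 := h1.comp h2 (fun τ hτ => ⟨trivial, hτ⟩)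
            exact h3.mono_left (nhdsWithin_mono _ diff_subset)
          have hxt : Tendsto (fun t => (t - t₀)⁻¹ • (x u t - x u t₀))
              (𝓝[Set.Ico 0 T \ {t₀}] t₀) (𝓝 (Fv u t₀)) := by
            have := (hflow u t₀ ht₀)
            rw [hasDerivWithinAt_iff_tendsto_slope] at this
            exact this
          have hX1t : Tendsto (fun t => (X u t).1) (𝓝[Set.Ico 0 T \ {t₀}] t₀)
              (𝓝 (X u t₀).1) := (continuous_fst.tendsto _).comp hXt
          have hX2t : Tendsto (fun t => (X u t).2) (𝓝[Set.Ico 0 T \ {t₀}] t₀)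
              (𝓝 (X u t₀).2) := (continuous_snd.tendsto _).comp hXt
          have hs1 : Tendsto (fun t => (t - t₀)⁻¹ * ((x u t).1 - (x u t₀).1))
              (𝓝[Set.Ico 0 T \ {t₀}] t₀) (𝓝 (Fv u t₀).1) :=
            (continuous_fst.tendsto _).comp hxt
          have hs2 : Tendsto (fun t => (t - t₀)⁻¹ * ((x u t).2 - (x u t₀).2))
              (𝓝[Set.Ico 0 T \ {t₀}] t₀) (𝓝 (Fv u t₀).2) :=
            (continuous_snd.tendsto _).comp hxt
          exact (hs1.mul (hX2t.add ((continuous_snd.tendsto _).comp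
            (tendsto_const_nhds.congr (fun _ => rfl))))).sub
            (hs2.mul (hX1t.add ((continuous_fst.tendsto _).comp
            (tendsto_const_nhds.congr (fun _ => rfl)))))
      apply hmain.congr'
      filter_upwards [self_mem_nhdsWithin] with t ht
      have ht' : t ∈ Set.Ico (0:ℝ) T := ht.1
      rw [slope_def_module, hBdiffeq t ht']
      rw [← intervalIntegral.integral_smul]
      apply intervalIntegral.integral_congr
      intro u _
      simp only [smul_eq_mul]
      ring
    -- evaluate D
    have hνu2π : (∫ u in (0:ℝ)..1, νu u t₀) = 2 * π := by
      rw [integral_eq_sub_of_hasDerivAt (fun u _ => hνu u t₀ ht₀)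
        ((hνusl t₀ ht₀).intervalIntegrable 0 1)]
      have := hνper 0 t₀ ht₀
      rw [zero_add] at this
      rw [this]
      ring
    have hDval : (1 / 2) * D = -(2 * π) + lenF g t₀ ^ 2 / (2 * areaF x g νf t₀) := by
      set cc : ℝ := lenF g t₀ / (2 * areaF x g νf t₀) with hccdef
      have hintg : ∀ u : ℝ,
          ((Fv u t₀).1 * ((X u t₀).2 + (X u t₀).2) - (Fv u t₀).2 * ((X u t₀).1 + (X u t₀).1))
          = (-2) * νu u t₀ + (cc * 2) * g u t₀ := by
        intro u
        have hgne : g u t₀ ≠ 0 := (hg u t₀ ht₀).ne'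
        have hF1 : (Fv u t₀).1 = (νu u t₀ / g u t₀ - cc) * (-Real.sin (νf u t₀)) := rfl
        have hF2 : (Fv u t₀).2 = (νu u t₀ / g u t₀ - cc) * Real.cos (νf u t₀) := rfl
        rw [hF1, hF2, hX1, hX2]
        have hsc := Real.sin_sq_add_cos_sq (νf u t₀)
        have ha : (νu u t₀ / g u t₀ - cc) * g u t₀ = νu u t₀ - cc * g u t₀ := by
          field_simp
        linear_combination (-2 * (Real.sin (νf u t₀) ^ 2 + Real.cos (νf u t₀) ^ 2)) * ha
          + (-2 * νu u t₀ + 2 * cc * g u t₀) * hsc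
      rw [hDdef, intervalIntegral.integral_congr (fun u _ => hintg u)]
      rw [intervalIntegral.integral_add
        ((continuous_const.fun_mul (hνusl t₀ ht₀)).intervalIntegrable 0 1)
        ((continuous_const.fun_mul (hgsl t₀ ht₀)).intervalIntegrable 0 1)]
      rw [intervalIntegral.integral_const_mul, intervalIntegral.integral_const_mul, hνu2π]
      rw [show (∫ u in (0:ℝ)..1, g u t₀) = lenF g t₀ from rfl]
      rw [hccdef]
      ring
    -- assemble
    have hAd : HasDerivWithinAt (areaF x g νf) ((1 / 2) * D) (Set.Ico 0 T) t₀ := by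
      have h2 := hBderiv.const_mul (1 / 2 : ℝ)
      exact h2.congr (fun τ _ => hBA τ) (hBA t₀)
    rw [hDval] at hAd
    exact hAd
  refine ⟨fun t ht => ⟨key t ht, hineq t ht⟩, ?_⟩
  have hcont : ContinuousOn (areaF x g νf) (Set.Ico 0 T) :=
    fun t ht => (key t ht).continuousWithinAt
  apply monotoneOn_of_hasDerivWithinAt_nonneg (convex_Ico 0 T) hcont
    (f' := fun t => -(2 * π) + lenF g t ^ 2 / (2 * areaF x g νf t))
  · intro t ht
    rw [interior_Ico] at ht
    exact ((key t (Ioo_subset_Ico_self ht)).mono interior_subset)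
  · intro t ht
    rw [interior_Ico] at ht
    exact hineq t (Ioo_subset_Ico_self ht)
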